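/- Let N ≥ 11 be an integer and let p > p_c. Let v(x) = β^{1/(p−1)} |x|^{−2/(p−1)} for x ≠ 0, so that v^{p−1}(x) = β/|x|². Then there exists ε > 0 such that for every φ ∈ C_c^∞(ℝ^N): (p+ε) ∫_{ℝ^N} v(x)^{p−1} φ(x)² dx ≤ ∫_{ℝ^N} |∇φ(x)|² dx. -/

import Mathlib

open MeasureTheory
open scoped InnerProductSpace

noncomputable section

/-- Euclidean space ℝ^N. -/
abbrev Euc (N : ℕ) := EuclideanSpace ℝ (Fin N)

/-- The Joseph–Lundgren exponent for `N ≥ 11`. -/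
def pJL (N : ℕ) : ℝ :=
  (((N : ℝ) - 2) ^ 2 - 4 * N + 8 * Real.sqrt ((N : ℝ) - 1)) /
    (((N : ℝ) - 2) * ((N : ℝ) - 10))

/-- `β(p, N) = (2/(p-1)) (N - 2 - 2/(p-1))`. -/
def betaC (p : ℝ) (N : ℕ) : ℝ := 2 / (p - 1) * ((N : ℝ) - 2 - 2 / (p - 1))


lemma key_algebra (N : ℕ) (hN : 11 ≤ N) (p : ℝ) (hp : pJL N < p) :
    1 < p ∧ 0 < betaC p N ∧ p * betaC p N < (((N : ℝ) - 2) / 2) ^ 2 := by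
  have hn : (11 : ℝ) ≤ (N : ℝ) := by exact_mod_cast hN
  set n : ℝ := (N : ℝ) with hn'
  have hs2 : Real.sqrt (n - 1) ^ 2 = n - 1 := Real.sq_sqrt (by linarith)
  set s : ℝ := Real.sqrt (n - 1) with hs'
  have hs0 : 0 < s := Real.sqrt_pos.2 (by linarith)
  have hd : 0 < (n - 2) * (n - 10) := by nlinarith
  have hpd : (n - 2) ^ 2 - 4 * n + 8 * s < p * ((n - 2) * (n - 10)) := by
    rw [pJL, div_lt_iff₀ hd] at hp; linarith
  have hp1 : 1 < p := by nlinarith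
  have hmc0 : 0 < n - 4 - 2 * s := by nlinarith
  have hA : 4 * (n - 4 + 2 * s) < (p - 1) * ((n - 2) * (n - 10)) := by nlinarith
  have hkey4 : 4 < (p - 1) * ((n - 4 - 2 * s)) := by
    nlinarith [mul_pos (sub_pos.2 hp1) hd, mul_lt_mul_of_pos_right hA hmc0]
  set m : ℝ := 2 / (p - 1) with hm'
  have hne : p - 1 ≠ 0 := by linarith
  have hm0 : 0 < m := div_pos (by norm_num) (by linarith)
  have hmc : m < (n - 4 - 2 * s) / 2 := by
    rw [hm', div_lt_div_iff₀ (by linarith) (by norm_num)]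
    linarith
  have hpm : p * m = m + 2 := by
    rw [hm']; field_simp; ring
  have hβ : 0 < betaC p N := by
    have h1 : m < n - 2 := by nlinarith
    have : betaC p N = m * (n - 2 - m) := by rw [betaC]
    rw [this]; exact mul_pos hm0 (by linarith)
  refine ⟨hp1, hβ, ?_⟩
  have hb : betaC p N = m * (n - 2 - m) := by rw [betaC]
  rw [hb, show p * (m * (n - 2 - m)) = (p * m) * (n - 2 - m) by ring, hpm]
  nlinarith [mul_pos (by linarith : (0:ℝ) < (n - 4 - 2 * s) / 2 - m)
    (by nlinarith : (0:ℝ) < (n - 4 + 2 * s) / 2 - m)]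


lemma euc_norm_sq (N : ℕ) (x : Euc N) : ‖x‖ ^ 2 = ∑ i, (x i) ^ 2 := by
  rw [EuclideanSpace.norm_eq, Real.sq_sqrt (by positivity)]
  simp [Real.norm_eq_abs, sq_abs]

lemma euc_sum_single (N : ℕ) (x : Euc N) :
    ∑ i, x i • (EuclideanSpace.single i (1:ℝ)) = x := by
  have h := (EuclideanSpace.basisFun (Fin N) ℝ).sum_repr' x
  simpa [EuclideanSpace.basisFun_apply, EuclideanSpace.inner_single_left] using h

lemma norm_grad (N : ℕ) (φ : Euc N → ℝ) (x : Euc N) :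
    ‖gradient φ x‖ = ‖fderiv ℝ φ x‖ :=
  LinearIsometryEquiv.norm_map _ _

set_option maxHeartbeats 1600000 in
lemma hardy_delta (N : ℕ) (hN : 11 ≤ N) (φ : Euc N → ℝ) (hφ : ContDiff ℝ (⊤ : ℕ∞) φ)
    (hc : HasCompactSupport φ) (δ : ℝ) (hδ : 0 < δ) :
    ((((N:ℝ) - 2) ^ 2) / 4) * ∫ x : Euc N, φ x ^ 2 * (‖x‖ ^ 2 + δ)⁻¹ ≤
      ∫ x : Euc N, ‖gradient φ x‖ ^ 2 := by
  have hn : (11:ℝ) ≤ (N:ℝ) := by exact_mod_cast hN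
  set n : ℝ := (N:ℝ) with hn'
  set w : Euc N → ℝ := fun x => ‖x‖ ^ 2 + δ with hw
  have hw0 : ∀ x, 0 < w x := fun x => by positivity
  have hwcont : Continuous w := (continuous_norm.pow 2).add continuous_const
  have hwinvc : Continuous fun x => (w x)⁻¹ := hwcont.inv₀ fun x => (hw0 x).ne'
  have hwsq : ∀ x : Euc N, ‖x‖ ^ 2 ≤ w x := fun x => by
    simp only [hw]; linarith
  have hW : ∀ x : Euc N, HasFDerivAt w (2 • (innerSL ℝ x)) x := fun x =>
    ((hasStrictFDerivAt_norm_sq x).hasFDerivAt).add_const δ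
  set e : Fin N → Euc N := fun i => EuclideanSpace.single i (1:ℝ) with he
  set g : Fin N → Euc N → ℝ := fun i x => x i * (w x)⁻¹ with hg
  have hginv : ∀ x : Euc N, HasFDerivAt (fun y => (w y)⁻¹)
      ((-((w x) ^ 2)⁻¹) • (2 • (innerSL ℝ x))) x := fun x =>
    (hasDerivAt_inv (hw0 x).ne').comp_hasFDerivAt x (hW x)
  have hgH : ∀ (i : Fin N) (x : Euc N), HasFDerivAt (g i)
      (x i • ((-((w x) ^ 2)⁻¹) • (2 • (innerSL ℝ x))) +
        (w x)⁻¹ • (EuclideanSpace.proj i : Euc N →L[ℝ] ℝ)) x := fun i x =>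
    ((EuclideanSpace.proj i).hasFDerivAt).mul (hginv x)
  have hgdiff : ∀ i, Differentiable ℝ (g i) := fun i x => (hgH i x).differentiableAt
  have hgic : ∀ i, Continuous (g i) := fun i =>
    ((EuclideanSpace.proj i : Euc N →L[ℝ] ℝ).continuous).mul hwinvc
  have hgval : ∀ (i : Fin N) (x : Euc N),
      fderiv ℝ (g i) x (e i) = (w x)⁻¹ - 2 * (x i) ^ 2 * ((w x) ^ 2)⁻¹ := by
    intro i x
    rw [(hgH i x).fderiv]
    simp only [ContinuousLinearMap.add_apply, ContinuousLinearMap.smul_apply,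
      ContinuousLinearMap.coe_smul', Pi.smul_apply, innerSL_apply_apply, he]
    rw [EuclideanSpace.inner_single_right]
    simp [EuclideanSpace.single_apply, smul_eq_mul]
    ring
  -- the function f = φ²
  set f : Euc N → ℝ := fun x => φ x * φ x with hf
  have hφdiff : Differentiable ℝ φ := hφ.differentiable (by simp)
  have hfdiff : Differentiable ℝ f := fun x => ((hφdiff x).mul (hφdiff x))
  have hfval : ∀ (x v : Euc N), fderiv ℝ f x v = 2 * φ x * fderiv ℝ φ x v := by
    intro x v
    have : fderiv ℝ f x = φ x • fderiv ℝ φ x + φ x • fderiv ℝ φ x :=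
      fderiv_mul (hφdiff x) (hφdiff x)
    rw [this]; simp [smul_eq_mul]; ring
  have hφc : Continuous φ := hφ.continuous
  have hDφc : Continuous fun x : Euc N => fderiv ℝ φ x := hφ.continuous_fderiv (by simp)
  have hDφic : ∀ u : Euc N, Continuous fun x : Euc N => fderiv ℝ φ x u := fun u =>
    hDφc.clm_apply continuous_const
  have hDφxc : Continuous fun x : Euc N => fderiv ℝ φ x x := hDφc.clm_apply continuous_id
  have hnormc : Continuous fun x : Euc N => ‖fderiv ℝ φ x‖ := hDφc.norm
  -- integrability helper
  have hintφ : ∀ h : Euc N → ℝ, Continuous h → Integrable (fun x => φ x * h x) := by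
    intro h hh
    apply Continuous.integrable_of_hasCompactSupport (hφc.mul hh)
    exact hc.mul_right
  have I1 : Integrable fun x : Euc N => φ x ^ 2 * (w x)⁻¹ := by
    have : (fun x : Euc N => φ x ^ 2 * (w x)⁻¹) = fun x => φ x * (φ x * (w x)⁻¹) :=
      funext fun x => by ring
    rw [this]; exact hintφ _ (hφc.mul hwinvc)
  have I2 : Integrable fun x : Euc N => ‖fderiv ℝ φ x‖ ^ 2 := by
    apply Continuous.integrable_of_hasCompactSupport (hnormc.pow 2)
    exact (hc.fderiv ℝ).comp_left (g := fun L : Euc N →L[ℝ] ℝ => ‖L‖ ^ 2) (by simp)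
  have Ia : ∀ i : Fin N, Integrable fun x : Euc N => fderiv ℝ f x (e i) * g i x := by
    intro i
    have : (fun x : Euc N => fderiv ℝ f x (e i) * g i x)
        = fun x => φ x * (2 * fderiv ℝ φ x (e i) * g i x) :=
      funext fun x => by rw [hfval]; ring
    rw [this]
    exact hintφ _ ((continuous_const.mul (hDφic _)).mul (hgic i))
  have Ib : ∀ i : Fin N, Integrable fun x : Euc N => f x * fderiv ℝ (g i) x (e i) := by
    intro i
    have : (fun x : Euc N => f x * fderiv ℝ (g i) x (e i))
        = fun x => φ x * (φ x * ((w x)⁻¹ - 2 * (x i) ^ 2 * ((w x) ^ 2)⁻¹)) :=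
      funext fun x => by rw [hgval]; simp only [hf]; ring
    rw [this]
    refine hintφ _ (hφc.mul (hwinvc.sub ?_))
    exact (continuous_const.mul
      (((EuclideanSpace.proj i : Euc N →L[ℝ] ℝ).continuous).pow 2)).mul
      ((hwcont.pow 2).inv₀ fun x => (pow_pos (hw0 x) 2).ne')
  have Ic : ∀ i : Fin N, Integrable fun x : Euc N => f x * g i x := by
    intro i
    have : (fun x : Euc N => f x * g i x) = fun x => φ x * (φ x * g i x) :=
      funext fun x => by simp only [hf]; ring
    rw [this]; exact hintφ _ (hφc.mul (hgic i))
  have hIBP : ∀ i : Fin N, ∫ x : Euc N, f x * fderiv ℝ (g i) x (e i)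
      = - ∫ x : Euc N, fderiv ℝ f x (e i) * g i x := fun i =>
    integral_mul_fderiv_eq_neg_fderiv_mul_of_integrable (Ia i) (Ib i) (Ic i) (fun x _ => hfdiff x) (fun x _ => hgdiff i x)
  -- sums
  have hAsum : ∀ x : Euc N, (∑ i, fderiv ℝ (g i) x (e i))
      = n * (w x)⁻¹ - 2 * ‖x‖ ^ 2 * ((w x) ^ 2)⁻¹ := by
    intro x
    rw [Finset.sum_congr rfl fun i _ => hgval i x, Finset.sum_sub_distrib]
    rw [Finset.sum_const, Finset.card_univ, Fintype.card_fin, euc_norm_sq]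
    rw [nsmul_eq_mul, Finset.mul_sum, Finset.sum_mul]
  have hLx : ∀ x : Euc N, ∑ i, fderiv ℝ φ x (e i) * x i = fderiv ℝ φ x x := by
    intro x
    have h1 := euc_sum_single N x
    calc ∑ i, fderiv ℝ φ x (e i) * x i = ∑ i, fderiv ℝ φ x (x i • e i) := by
          refine Finset.sum_congr rfl fun i _ => ?_
          rw [(fderiv ℝ φ x).map_smul, smul_eq_mul]; ring
      _ = fderiv ℝ φ x (∑ i, x i • e i) := (map_sum _ _ _).symm
      _ = fderiv ℝ φ x x := by rw [he, h1]
  have hBsum : ∀ x : Euc N, (∑ i, fderiv ℝ f x (e i) * g i x)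
      = 2 * φ x * fderiv ℝ φ x x * (w x)⁻¹ := by
    intro x
    calc ∑ i, fderiv ℝ f x (e i) * g i x
        = ∑ i, (2 * φ x * (w x)⁻¹) * (fderiv ℝ φ x (e i) * x i) := by
          refine Finset.sum_congr rfl fun i _ => ?_
          rw [hfval]; simp only [hg]; ring
      _ = (2 * φ x * (w x)⁻¹) * ∑ i, fderiv ℝ φ x (e i) * x i := by
          rw [Finset.mul_sum]
      _ = 2 * φ x * fderiv ℝ φ x x * (w x)⁻¹ := by rw [hLx x]; ring
  -- main identity
  have hkeyEq : ∫ x : Euc N, f x * (n * (w x)⁻¹ - 2 * ‖x‖ ^ 2 * ((w x) ^ 2)⁻¹)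
      = - ∫ x : Euc N, 2 * φ x * fderiv ℝ φ x x * (w x)⁻¹ := by
    have e1 : (fun x : Euc N => f x * (n * (w x)⁻¹ - 2 * ‖x‖ ^ 2 * ((w x) ^ 2)⁻¹))
        = fun x => ∑ i, f x * fderiv ℝ (g i) x (e i) :=
      funext fun x => by rw [← Finset.mul_sum, hAsum]
    have e2 : (fun x : Euc N => 2 * φ x * fderiv ℝ φ x x * (w x)⁻¹)
        = fun x => ∑ i, fderiv ℝ f x (e i) * g i x :=
      funext fun x => by rw [hBsum]
    rw [e1, e2, integral_finset_sum _ (fun i _ => Ib i),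
      integral_finset_sum _ (fun i _ => Ia i),
      Finset.sum_congr rfl fun i _ => hIBP i, ← Finset.sum_neg_distrib]
  -- notation
  set D : ℝ := ∫ x : Euc N, ‖fderiv ℝ φ x‖ ^ 2 with hD
  set I : ℝ := ∫ x : Euc N, φ x ^ 2 * (w x)⁻¹ with hI
  have hne2 : n - 2 ≠ 0 := by linarith
  have IA : Integrable fun x : Euc N =>
      f x * (n * (w x)⁻¹ - 2 * ‖x‖ ^ 2 * ((w x) ^ 2)⁻¹) := by
    have : (fun x : Euc N => f x * (n * (w x)⁻¹ - 2 * ‖x‖ ^ 2 * ((w x) ^ 2)⁻¹))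
        = fun x => φ x * (φ x * (n * (w x)⁻¹ - 2 * ‖x‖ ^ 2 * ((w x) ^ 2)⁻¹)) :=
      funext fun x => by simp only [hf]; ring
    rw [this]
    exact hintφ _ (hφc.mul ((continuous_const.mul hwinvc).sub
      ((continuous_const.mul (continuous_norm.pow 2)).mul
        ((hwcont.pow 2).inv₀ fun x => (pow_pos (hw0 x) 2).ne'))))
  have step1 : (n - 2) * I ≤
      ∫ x : Euc N, f x * (n * (w x)⁻¹ - 2 * ‖x‖ ^ 2 * ((w x) ^ 2)⁻¹) := by
    rw [hI, ← integral_const_mul _ _]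
    refine integral_mono (I1.const_mul _) IA ?_
    intro x
    have hu0 : 0 < (w x)⁻¹ := inv_pos.2 (hw0 x)
    have hru : ‖x‖ ^ 2 * (w x)⁻¹ ≤ 1 := by
      rw [← mul_inv_cancel₀ (hw0 x).ne']
      exact mul_le_mul_of_nonneg_right (hwsq x) hu0.le
    have hww : ((w x) ^ 2)⁻¹ = (w x)⁻¹ * (w x)⁻¹ := by rw [sq, mul_inv]
    simp only [hf, hww]
    nlinarith [mul_nonneg (mul_nonneg (sq_nonneg (φ x)) hu0.le) (sub_nonneg.2 hru)]
  have step2 : (- ∫ x : Euc N, 2 * φ x * fderiv ℝ φ x x * (w x)⁻¹)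
      ≤ ∫ x : Euc N, ((n - 2) / 2 * (φ x ^ 2 * (w x)⁻¹)
          + (2 / (n - 2)) * ‖fderiv ℝ φ x‖ ^ 2) := by
    rw [← integral_neg]
    have IB2 : Integrable fun x : Euc N => -(2 * φ x * fderiv ℝ φ x x * (w x)⁻¹) := by
      have : (fun x : Euc N => -(2 * φ x * fderiv ℝ φ x x * (w x)⁻¹))
          = fun x => φ x * (-(2 * fderiv ℝ φ x x * (w x)⁻¹)) := funext fun x => by ring
      rw [this]; exact hintφ _ ((continuous_const.mul hDφxc).mul hwinvc).neg
    refine integral_mono IB2 ((I1.const_mul _).add (I2.const_mul _)) ?_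
    intro x
    have hu0 : 0 < (w x)⁻¹ := inv_pos.2 (hw0 x)
    have hru : ‖x‖ ^ 2 * (w x)⁻¹ ≤ 1 := by
      rw [← mul_inv_cancel₀ (hw0 x).ne']
      exact mul_le_mul_of_nonneg_right (hwsq x) hu0.le
    have habs : -(2 * φ x * fderiv ℝ φ x x) ≤ 2 * |φ x| * (‖fderiv ℝ φ x‖ * ‖x‖) := by
      have h1 : |fderiv ℝ φ x x| ≤ ‖fderiv ℝ φ x‖ * ‖x‖ := by
        simpa [Real.norm_eq_abs] using (fderiv ℝ φ x).le_opNorm x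
      calc -(2 * φ x * fderiv ℝ φ x x) ≤ |2 * φ x * fderiv ℝ φ x x| := neg_le_abs _
        _ = 2 * |φ x| * |fderiv ℝ φ x x| := by rw [abs_mul, abs_mul, abs_two]
        _ ≤ 2 * |φ x| * (‖fderiv ℝ φ x‖ * ‖x‖) :=
            mul_le_mul_of_nonneg_left h1 (by positivity)
    have ht : (0:ℝ) < (n - 2) / 2 := by linarith
    have httL : (n - 2) / 2 * ((2 / (n - 2)) * ‖fderiv ℝ φ x‖ ^ 2)
        = ‖fderiv ℝ φ x‖ ^ 2 := by field_simp
    have hmul : (n - 2) / 2 * (2 * |φ x| * (‖fderiv ℝ φ x‖ * ‖x‖) * (w x)⁻¹)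
        ≤ (n - 2) / 2 * ((n - 2) / 2 * (φ x ^ 2 * (w x)⁻¹)
            + (2 / (n - 2)) * ‖fderiv ℝ φ x‖ ^ 2) := by
      rw [mul_add, httL, ← sq_abs (φ x)]
      nlinarith [mul_nonneg hu0.le
          (sq_nonneg ((n - 2) / 2 * |φ x| - ‖fderiv ℝ φ x‖ * ‖x‖)),
        mul_nonneg (sq_nonneg ‖fderiv ℝ φ x‖) (sub_nonneg.2 hru), sq_abs (φ x)]
    have hgoal2 := le_of_mul_le_mul_left hmul ht
    calc -(2 * φ x * fderiv ℝ φ x x * (w x)⁻¹)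
        = -(2 * φ x * fderiv ℝ φ x x) * (w x)⁻¹ := by ring
      _ ≤ 2 * |φ x| * (‖fderiv ℝ φ x‖ * ‖x‖) * (w x)⁻¹ :=
          mul_le_mul_of_nonneg_right habs hu0.le
      _ ≤ _ := hgoal2
  have hsum2 : ∫ x : Euc N, ((n - 2) / 2 * (φ x ^ 2 * (w x)⁻¹)
      + (2 / (n - 2)) * ‖fderiv ℝ φ x‖ ^ 2) = (n - 2) / 2 * I + (2 / (n - 2)) * D := by
    rw [integral_add (I1.const_mul _) (I2.const_mul _), integral_const_mul _ _,
      integral_const_mul _ _, ← hI, ← hD]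
  have hfinal : (n - 2) * I ≤ (n - 2) / 2 * I + (2 / (n - 2)) * D := by
    calc (n - 2) * I ≤ _ := step1
      _ = - ∫ x : Euc N, 2 * φ x * fderiv ℝ φ x x * (w x)⁻¹ := hkeyEq
      _ ≤ _ := step2
      _ = (n - 2) / 2 * I + (2 / (n - 2)) * D := hsum2
  have hI0 : 0 ≤ I := integral_nonneg fun x => by positivity
  have hD0 : 0 ≤ D := integral_nonneg fun x => by positivity
  have hcD : (n - 2) / 2 * ((2 / (n - 2)) * D) = D := by field_simp
  have hgradint : (∫ x : Euc N, ‖gradient φ x‖ ^ 2) = D := by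
    rw [hD]; simp only [norm_grad]
  rw [hgradint]
  nlinarith [mul_le_mul_of_nonneg_left hfinal (by linarith : (0:ℝ) ≤ (n - 2) / 2), hcD,
    hI0, hD0]


/-- For `N ≥ 11`, `p > p_c` and the singular radial profile
`v(x) = β^(1/(p-1)) |x|^(-2/(p-1))`, there exists `ε > 0` such that
`(p+ε) ∫ v^(p-1) φ² ≤ ∫ |∇φ|²` for all `φ ∈ C_c^∞(ℝ^N)`. -/
theorem singular_solution_strictly_stable (N : ℕ) (hN : 11 ≤ N) (p : ℝ)
    (hp : pJL N < p)
    (v : Euc N → ℝ)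
    (hv : ∀ x : Euc N, x ≠ 0 →
      v x = betaC p N ^ (1 / (p - 1)) * ‖x‖ ^ (-2 / (p - 1))) :
    ∃ ε : ℝ, 0 < ε ∧
      ∀ φ : Euc N → ℝ, ContDiff ℝ (⊤ : ℕ∞) φ → HasCompactSupport φ →
        (p + ε) * (∫ x : Euc N, v x ^ (p - 1) * φ x ^ 2) ≤
          ∫ x : Euc N, ‖gradient φ x‖ ^ 2 := by
  obtain ⟨hp1, hβ0, hkey⟩ := key_algebra N hN p hp
  set β := betaC p N with hβ'
  refine ⟨(((N : ℝ) - 2) / 2) ^ 2 / β - p, by rw [sub_pos, lt_div_iff₀ hβ0]; exact hkey, ?_⟩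
  intro φ hφ hc
  have hεβ : (p + ((((N : ℝ) - 2) / 2) ^ 2 / β - p)) * β = ((N : ℝ) - 2) ^ 2 / 4 := by
    field_simp; ring
  haveI : Nonempty (Fin N) := ⟨⟨0, by omega⟩⟩
  have hne : ∀ᵐ x : Euc N ∂volume, x ≠ 0 := by
    rw [MeasureTheory.ae_iff]
    have h : {x : Euc N | ¬ x ≠ 0} = {0} := by ext x; simp
    rw [h]; exact measure_singleton 0
  have hp1' : p - 1 ≠ 0 := by linarith
  have hae : (fun x : Euc N => v x ^ (p - 1) * φ x ^ 2)
      =ᵐ[volume] fun x => β * (φ x ^ 2 * ((‖x‖ ^ 2)⁻¹)) := by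
    filter_upwards [hne] with x hx
    have e1 : (1 / (p - 1)) * (p - 1) = 1 := by field_simp
    have e2 : (-2 / (p - 1)) * (p - 1) = -2 := by field_simp
    rw [hv x hx,
      Real.mul_rpow (Real.rpow_nonneg hβ0.le _) (Real.rpow_nonneg (norm_nonneg x) _),
      ← Real.rpow_mul hβ0.le, ← Real.rpow_mul (norm_nonneg x), e1, e2, Real.rpow_one,
      show (-2 : ℝ) = -(2:ℝ) by norm_num, Real.rpow_neg (norm_nonneg x),
      show ((2:ℝ)) = ((2:ℕ):ℝ) by norm_num, Real.rpow_natCast]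
    ring
  rw [integral_congr_ae hae, integral_const_mul]
  by_cases hF : Integrable (fun x : Euc N => φ x ^ 2 * ((‖x‖ ^ 2)⁻¹)) volume
  · -- integrable case
    have hcont : ∀ k : ℕ, Continuous fun x : Euc N => φ x ^ 2 * (‖x‖ ^ 2 + ((k:ℝ)+1)⁻¹)⁻¹ := by
      intro k
      exact (hφ.continuous.pow 2).mul
        (((continuous_norm.pow 2).add continuous_const).inv₀ fun x =>
          (by positivity : (0:ℝ) < ‖x‖ ^ 2 + ((k:ℝ)+1)⁻¹).ne')
    have hlim : Filter.Tendsto (fun k : ℕ => ∫ x : Euc N, φ x ^ 2 * (‖x‖ ^ 2 + ((k:ℝ)+1)⁻¹)⁻¹)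
        Filter.atTop (nhds (∫ x : Euc N, φ x ^ 2 * (‖x‖ ^ 2)⁻¹)) := by
      refine tendsto_integral_of_dominated_convergence _
        (fun k => (hcont k).aestronglyMeasurable) hF ?_ ?_
      · intro k
        filter_upwards [hne] with x hx
        have h2 : (0:ℝ) < ‖x‖ ^ 2 := by
          have := norm_pos_iff.2 hx; positivity
        rw [Real.norm_eq_abs, abs_of_nonneg (by positivity)]
        refine mul_le_mul_of_nonneg_left ?_ (sq_nonneg (φ x))
        exact inv_anti₀ h2 (le_add_of_nonneg_right (by positivity))
      · filter_upwards [hne] with x hx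
        have h2 : (0:ℝ) < ‖x‖ ^ 2 := by
          have := norm_pos_iff.2 hx; positivity
        refine Filter.Tendsto.const_mul _ (Filter.Tendsto.inv₀ ?_ h2.ne')
        have h3 : Filter.Tendsto (fun k : ℕ => ((k:ℝ)+1)⁻¹) Filter.atTop (nhds 0) := by
          simpa only [one_div] using tendsto_one_div_add_atTop_nhds_zero_nat (𝕜 := ℝ)
        simpa using (tendsto_const_nhds (x := ‖x‖ ^ 2)).add h3
    have hb : ∀ k : ℕ, (((N:ℝ) - 2) ^ 2 / 4) *
        ∫ x : Euc N, φ x ^ 2 * (‖x‖ ^ 2 + ((k:ℝ)+1)⁻¹)⁻¹ ≤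
        ∫ x : Euc N, ‖gradient φ x‖ ^ 2 := fun k =>
      hardy_delta N hN φ hφ hc _ (by positivity)
    have hle : (((N:ℝ) - 2) ^ 2 / 4) * (∫ x : Euc N, φ x ^ 2 * (‖x‖ ^ 2)⁻¹) ≤
        ∫ x : Euc N, ‖gradient φ x‖ ^ 2 :=
      le_of_tendsto (hlim.const_mul _) (Filter.Eventually.of_forall hb)
    calc (p + ((((N : ℝ) - 2) / 2) ^ 2 / β - p)) * (β * ∫ x : Euc N, φ x ^ 2 * (‖x‖ ^ 2)⁻¹)
        = ((p + ((((N : ℝ) - 2) / 2) ^ 2 / β - p)) * β) * ∫ x : Euc N, φ x ^ 2 * (‖x‖ ^ 2)⁻¹ := by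
          ring
      _ = (((N:ℝ) - 2) ^ 2 / 4) * ∫ x : Euc N, φ x ^ 2 * (‖x‖ ^ 2)⁻¹ := by rw [hεβ]
      _ ≤ _ := hle
  · rw [integral_undef hF, mul_zero, mul_zero]
    exact integral_nonneg fun x => by positivity
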